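/- For every i ∈ [n-1] and π ∈ S_n, p_i(rev(π)) = rev(p_i(π)), where rev is the reversal operator on words. -/

import Mathlib

/-!
Reversal moves the entry at position `k` of a word of length `m` to position `m - 1 - k`.
This is an order-reversing bijection of positions, so an entry lies strictly between `i` and
`i + 1` in `π` exactly when it does in `rev π` (the roles of `min` and `max` are exchanged).
Hence `p_i` acts on `π` and `rev π` in the same case, and exchanging the values `i` and `i + 1`
is a letterwise map, which commutes with reversal.
-/

/-- `l` is a permutation of `{1, …, n}`, written as a word. -/
def IsPermList (n : ℕ) (l : List ℕ) : Prop := l.Perm (List.range' 1 n)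

/-- The word obtained from `l` by exchanging the positions of the entries `i` and `i+1`. -/
def swapEntries (i : ℕ) (l : List ℕ) : List ℕ :=
  l.map fun x => if x = i then i + 1 else if x = i + 1 then i else x

/-- Some entry larger than `i+1` appears (strictly) between the entries `i` and `i+1`
in the word `l`. -/
def ToggleApplies (i : ℕ) (l : List ℕ) : Prop :=
  ∃ a ∈ l, i + 1 < a ∧
    min (l.idxOf i) (l.idxOf (i + 1)) < l.idxOf a ∧
    l.idxOf a < max (l.idxOf i) (l.idxOf (i + 1))

open scoped Classical in
/-- The polyurethane toggle `p i`. -/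
noncomputable def toggle (i : ℕ) (l : List ℕ) : List ℕ :=
  if ToggleApplies i l then swapEntries i l else l

theorem List.Nodup.idxOf_reverse {α : Type*} [DecidableEq α] {l : List α} (h : l.Nodup)
    {x : α} (hx : x ∈ l) : l.reverse.idxOf x = l.length - 1 - l.idxOf x := by
  have hlt : l.idxOf x < l.length := List.idxOf_lt_length_iff.2 hx
  have hlt' : l.length - 1 - l.idxOf x < l.reverse.length := by
    rw [List.length_reverse]
    omega
  have hget : l.reverse[l.length - 1 - l.idxOf x] = x := by
    rw [List.getElem_reverse]
    simp only [show l.length - 1 - (l.length - 1 - l.idxOf x) = l.idxOf x by omega]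
    exact List.getElem_idxOf hlt
  simpa only [hget] using (List.nodup_reverse.2 h).idxOf_getElem _ hlt'

theorem swapEntries_reverse (i : ℕ) (l : List ℕ) :
    swapEntries i l.reverse = (swapEntries i l).reverse :=
  List.map_reverse ..

theorem toggleApplies_reverse_iff {i : ℕ} {l : List ℕ} (h : l.Nodup) (hi : i ∈ l)
    (hi' : i + 1 ∈ l) : ToggleApplies i l.reverse ↔ ToggleApplies i l := by
  simp only [ToggleApplies, List.mem_reverse]
  refine exists_congr fun a => and_congr_right fun ha => and_congr_right fun _ => ?_
  rw [h.idxOf_reverse hi, h.idxOf_reverse hi', h.idxOf_reverse ha]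
  have := List.idxOf_lt_length_iff.2 hi
  have := List.idxOf_lt_length_iff.2 hi'
  have := List.idxOf_lt_length_iff.2 ha
  omega

theorem toggle_reverse (n i : ℕ) (hi₁ : 1 ≤ i) (hi₂ : i ≤ n - 1)
    (l : List ℕ) (hl : IsPermList n l) :
    toggle i l.reverse = (toggle i l).reverse := by
  have hmem : ∀ x, 1 ≤ x → x ≤ n → x ∈ l := fun x h₁ h₂ =>
    hl.mem_iff.2 (List.mem_range'_1.2 ⟨h₁, by omega⟩)
  have hnodup : l.Nodup := hl.nodup_iff.2 List.nodup_range'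
  rw [toggle, toggle, toggleApplies_reverse_iff hnodup (hmem i hi₁ (by omega))
    (hmem (i + 1) (by omega) (by omega))]
  split_ifs
  · exact swapEntries_reverse i l
  · rfl
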